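/- In the index-1 setting with adjoint data ψ = 0 and terminal condition φ^{(y)}(T) = ζ^y (i.e., ζ^z = 0), the error in the terminal-time QoI depending only on the differential variables satisfies (e^{(y)}(T), ζ^y) = (φ^{(y)}(0), e^{(y)}(0)) + ∫₀ᵀ (φ^{(y)}, f(Y,Z) - Ẏ) dt + ∫₀ᵀ (φ^{(z)}, g(Y,Z)) dt. -/

import Mathlib

/-
Pair the differential error `e = y - Y` with the adjoint `φʸ`. By the integral mean value
theorem along the segment from `(Y, Z)` to `(y, z)`, `f(y, z) - f(Y, Z)` and `-g(Y, Z)` are the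
averaged Jacobians applied to the errors `(y - Y, z - Z)`; the adjoint DAE is built from exactly
these Jacobians, so in `d/dt (φʸ ⬝ e)` every error term cancels (the algebraic adjoint equation
removes the unknown `z - Z`) and only the residuals `φʸ ⬝ (f(Y, Z) - Y')` and `φᶻ ⬝ g(Y, Z)`
remain. Integrating over `[0, T]` and using `φʸ(T) = ζʸ` gives the identity.
-/

open Matrix MeasureTheory

/-- The averaged Jacobian matrix `∫₀¹ DF(s) (c s) ds`. -/
noncomputable def avgJac {p q : ℕ} (F : ℝ → (Fin p → ℝ) → (Fin q → ℝ))
    (c : ℝ → Fin p → ℝ) : Matrix (Fin q) (Fin p) ℝ :=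
  LinearMap.toMatrix'
    ((∫ s in (0:ℝ)..1, fderiv ℝ (F s) (c s)).toLinearMap)

open Set

theorem ContinuousOn.dotProduct {X ι R : Type*} [TopologicalSpace X] [Fintype ι] [Mul R]
    [AddCommMonoid R] [TopologicalSpace R] [ContinuousAdd R] [ContinuousMul R]
    {s : Set X} {u v : X → ι → R} (hu : ContinuousOn u s) (hv : ContinuousOn v s) :
    ContinuousOn (fun x => u x ⬝ᵥ v x) s := by
  rw [continuousOn_iff_continuous_domRestrict] at *
  exact hu.dotProduct hv

theorem HasDerivAt.dotProduct {𝕜 ι : Type*} [NontriviallyNormedField 𝕜] [Fintype ι]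
    {u v : 𝕜 → ι → 𝕜} {u' v' : ι → 𝕜} {t : 𝕜}
    (hu : HasDerivAt u u' t) (hv : HasDerivAt v v' t) :
    HasDerivAt (fun t => u t ⬝ᵥ v t) (u' ⬝ᵥ v t + u t ⬝ᵥ v') t := by
  simp only [_root_.dotProduct]
  rw [← Finset.sum_add_distrib]
  exact HasDerivAt.fun_sum fun i _ => (hasDerivAt_pi.mp hu i).mul (hasDerivAt_pi.mp hv i)

section Calculus

variable {E F G : Type*} [NormedAddCommGroup E] [NormedSpace ℝ E] [NormedAddCommGroup F]
  [NormedSpace ℝ F] [NormedAddCommGroup G] [NormedSpace ℝ G]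

theorem ContDiff.sub_eq_integral_fderiv_segment [CompleteSpace G] {f : E → G}
    (hf : ContDiff ℝ 1 f) (a b : E) :
    f a - f b = ∫ s in (0:ℝ)..1, fderiv ℝ f (s • a + (1 - s) • b) (a - b) := by
  have hc (s : ℝ) : HasDerivAt (fun s : ℝ => s • a + (1 - s) • b) (a - b) s := by
    simpa [sub_eq_add_neg] using
      ((hasDerivAt_id s).smul_const a).fun_add (((hasDerivAt_id s).const_sub 1).smul_const b)
  have hcont : Continuous fun s : ℝ => fderiv ℝ f (s • a + (1 - s) • b) (a - b) :=
    ((hf.continuous_fderiv one_ne_zero).comp (by fun_prop)).clm_apply continuous_const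
  rw [intervalIntegral.integral_eq_sub_of_hasDerivAt
    (fun s _ => (hf.differentiable one_ne_zero _).hasFDerivAt.comp_hasDerivAt s (hc s))
    (hcont.intervalIntegrable 0 1)]
  simp

theorem DifferentiableAt.fderiv_comp_prodMk_left {f : E × F → G} {x : E} {y : F}
    (hf : DifferentiableAt ℝ f (x, y)) :
    fderiv ℝ (fun x' => f (x', y)) x = fderiv ℝ f (x, y) ∘L .inl ℝ E F :=
  (hf.hasFDerivAt.comp x (hasFDerivAt_prodMk_left x y)).fderiv

theorem DifferentiableAt.fderiv_comp_prodMk_right {f : E × F → G} {x : E} {y : F}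
    (hf : DifferentiableAt ℝ f (x, y)) :
    fderiv ℝ (fun y' => f (x, y')) y = fderiv ℝ f (x, y) ∘L .inr ℝ E F :=
  (hf.hasFDerivAt.comp y (hasFDerivAt_prodMk_right x y)).fderiv

end Calculus

theorem avgJac_mulVec {p q : ℕ} {F : ℝ → (Fin p → ℝ) → Fin q → ℝ} {c : ℝ → Fin p → ℝ}
    (hF : IntervalIntegrable (fun s => fderiv ℝ (F s) (c s)) volume 0 1) (w : Fin p → ℝ) :
    avgJac F c *ᵥ w = ∫ s in (0:ℝ)..1, fderiv ℝ (F s) (c s) w := by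
  rw [avgJac, ← Matrix.toLin'_apply, Matrix.toLin'_toMatrix']
  exact ContinuousLinearMap.intervalIntegral_apply hF w

theorem ContDiff.sub_eq_avgJac_mulVec_add {p k q : ℕ}
    {f : (Fin p → ℝ) × (Fin k → ℝ) → Fin q → ℝ} (hf : ContDiff ℝ 1 f)
    (a b : Fin p → ℝ) (u v : Fin k → ℝ) :
    f (a, u) - f (b, v)
      = avgJac (fun s y' => f (y', s • u + (1 - s) • v)) (fun s => s • a + (1 - s) • b) *ᵥ (a - b)
      + avgJac (fun s z' => f (s • a + (1 - s) • b, z')) (fun s => s • u + (1 - s) • v)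
          *ᵥ (u - v) := by
  set Df := fun s : ℝ => fderiv ℝ f (s • a + (1 - s) • b, s • u + (1 - s) • v)
  have hDf : Continuous Df := (hf.continuous_fderiv one_ne_zero).comp (by fun_prop)
  have hleft (s : ℝ) : fderiv ℝ (fun y' => f (y', s • u + (1 - s) • v)) (s • a + (1 - s) • b)
      = Df s ∘L .inl ℝ _ _ :=
    (hf.differentiable one_ne_zero _).fderiv_comp_prodMk_left
  have hright (s : ℝ) : fderiv ℝ (fun z' => f (s • a + (1 - s) • b, z')) (s • u + (1 - s) • v)
      = Df s ∘L .inr ℝ _ _ :=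
    (hf.differentiable one_ne_zero _).fderiv_comp_prodMk_right
  have hint (w : (Fin p → ℝ) × (Fin k → ℝ)) :
      IntervalIntegrable (fun s => Df s w) volume 0 1 :=
    (hDf.clm_apply continuous_const).intervalIntegrable 0 1
  rw [avgJac_mulVec (by
      simp_rw [hleft]; exact (hDf.clm_comp continuous_const).intervalIntegrable 0 1),
    avgJac_mulVec (by
      simp_rw [hright]; exact (hDf.clm_comp continuous_const).intervalIntegrable 0 1)]
  simp only [hleft, hright, ContinuousLinearMap.coe_comp, Function.comp_apply,
    ContinuousLinearMap.inl_apply, ContinuousLinearMap.inr_apply]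
  rw [hf.sub_eq_integral_fderiv_segment (a, u) (b, v),
    ← intervalIntegral.integral_add (hint _) (hint _)]
  refine intervalIntegral.integral_congr fun s _ => ?_
  simp only [Df, Prod.smul_mk, Prod.mk_add_mk, Prod.mk_sub_mk, ← map_add, add_zero, zero_add]

theorem adjoint_residual_identity {ι κ R : Type*} [Fintype ι] [Fintype κ] [CommRing R]
    {Fy : Matrix ι ι R} {Fz : Matrix ι κ R} {Gy : Matrix κ ι R} {Gz : Matrix κ κ R}
    {φ e f₁ f₂ w : ι → R} {ψ d g₂ : κ → R}
    (hf : f₁ - f₂ = Fy *ᵥ e + Fz *ᵥ d) (hg : -g₂ = Gy *ᵥ e + Gz *ᵥ d)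
    (hadj : Fzᵀ *ᵥ φ + Gzᵀ *ᵥ ψ = 0) :
    -(Fyᵀ *ᵥ φ + Gyᵀ *ᵥ ψ) ⬝ᵥ e + φ ⬝ᵥ (f₁ - w) = φ ⬝ᵥ (f₂ - w) + ψ ⬝ᵥ g₂ := by
  have hφ := congrArg (φ ⬝ᵥ ·) hf
  have hψ := congrArg (ψ ⬝ᵥ ·) hg
  have hd := congrArg (· ⬝ᵥ d) hadj
  simp only [dotProduct_add, dotProduct_sub, dotProduct_neg, add_dotProduct, neg_dotProduct,
    zero_dotProduct, mulVec_transpose, ← dotProduct_mulVec] at hφ hψ hd ⊢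
  linear_combination hφ + hψ + hd

theorem index1_terminal_qoi_error_differential_only_general {n m : ℕ} (T : ℝ) (hT : 0 < T)
    (f : (Fin n → ℝ) × (Fin m → ℝ) → (Fin n → ℝ))
    (g : (Fin n → ℝ) × (Fin m → ℝ) → (Fin m → ℝ))
    (hf : ContDiff ℝ 1 f) (hg : ContDiff ℝ 1 g)
    (y Y Y' φy : ℝ → Fin n → ℝ) (z Z φz : ℝ → Fin m → ℝ)
    (ζy : Fin n → ℝ)
    (fby : ℝ → Matrix (Fin n) (Fin n) ℝ) (fbz : ℝ → Matrix (Fin n) (Fin m) ℝ)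
    (gby : ℝ → Matrix (Fin m) (Fin n) ℝ) (gbz : ℝ → Matrix (Fin m) (Fin m) ℝ)
    -- the averaged Jacobians along the segment between (y,z) and (Y,Z)
    (hfby : ∀ t, fby t = avgJac (fun s y' => f (y', s • z t + (1 - s) • Z t))
      (fun s => s • y t + (1 - s) • Y t))
    (hfbz : ∀ t, fbz t = avgJac (fun s z' => f (s • y t + (1 - s) • Y t, z'))
      (fun s => s • z t + (1 - s) • Z t))
    (hgby : ∀ t, gby t = avgJac (fun s y' => g (y', s • z t + (1 - s) • Z t))
      (fun s => s • y t + (1 - s) • Y t))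
    (hgbz : ∀ t, gbz t = avgJac (fun s z' => g (s • y t + (1 - s) • Y t, z'))
      (fun s => s • z t + (1 - s) • Z t))
    -- the true solution of the DAE
    (hy : ∀ t ∈ Set.Icc (0:ℝ) T, HasDerivAt y (f (y t, z t)) t)
    (hcon : ∀ t ∈ Set.Icc (0:ℝ) T, g (y t, z t) = 0)
    -- the approximate solution and its derivative
    (hY : ∀ t ∈ Set.Icc (0:ℝ) T, HasDerivAt Y (Y' t) t)
    -- the adjoint DAE
    (hadj1 : ∀ t ∈ Set.Ico (0:ℝ) T,
      HasDerivAt φy (-((fby t)ᵀ *ᵥ φy t + (gby t)ᵀ *ᵥ φz t)) t)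
    (hadj2 : ∀ t ∈ Set.Ico (0:ℝ) T,
      (fbz t)ᵀ *ᵥ φy t + (gbz t)ᵀ *ᵥ φz t = 0)
    -- sufficient smoothness for the integrals and integration by parts
    (hY'c : Continuous Y')
    (hZc : Continuous Z)
    (hφyc : Continuous φy) (hφzc : Continuous φz)
    -- adjoint terminal condition (ζᶻ = 0)
    (hφT : φy T = ζy) :
    (y T - Y T) ⬝ᵥ ζy
    = φy 0 ⬝ᵥ (y 0 - Y 0)
      + (∫ t in (0:ℝ)..T, φy t ⬝ᵥ (f (Y t, Z t) - Y' t))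
      + (∫ t in (0:ℝ)..T, φz t ⬝ᵥ g (Y t, Z t)) := by
  have hyC : ContinuousOn y (Icc 0 T) := fun t ht => (hy t ht).continuousAt.continuousWithinAt
  have hYC : ContinuousOn Y (Icc 0 T) := fun t ht => (hY t ht).continuousAt.continuousWithinAt
  have hderiv (t : ℝ) (ht : t ∈ Ioo 0 T) : HasDerivAt (fun t => φy t ⬝ᵥ (y t - Y t))
      (φy t ⬝ᵥ (f (Y t, Z t) - Y' t) + φz t ⬝ᵥ g (Y t, Z t)) t := by
    have hlin_g := hg.sub_eq_avgJac_mulVec_add (y t) (Y t) (z t) (Z t)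
    rw [hcon t (Ioo_subset_Icc_self ht), zero_sub, ← hgby, ← hgbz] at hlin_g
    have hlin_f := hf.sub_eq_avgJac_mulVec_add (y t) (Y t) (z t) (Z t)
    rw [← hfby, ← hfbz] at hlin_f
    exact ((hadj1 t (Ioo_subset_Ico_self ht)).dotProduct
      ((hy t (Ioo_subset_Icc_self ht)).fun_sub (hY t (Ioo_subset_Icc_self ht)))).congr_deriv
      (adjoint_residual_identity hlin_f hlin_g (hadj2 t (Ioo_subset_Ico_self ht)))
  have hint₁ : IntervalIntegrable (fun t => φy t ⬝ᵥ (f (Y t, Z t) - Y' t)) volume 0 T :=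
    (hφyc.continuousOn.dotProduct ((hf.continuous.comp_continuousOn
      (hYC.prodMk hZc.continuousOn)).sub hY'c.continuousOn)).intervalIntegrable_of_Icc hT.le
  have hint₂ : IntervalIntegrable (fun t => φz t ⬝ᵥ g (Y t, Z t)) volume 0 T :=
    (hφzc.continuousOn.dotProduct (hg.continuous.comp_continuousOn
      (hYC.prodMk hZc.continuousOn))).intervalIntegrable_of_Icc hT.le
  have hFTC : ∫ t in (0:ℝ)..T, (φy t ⬝ᵥ (f (Y t, Z t) - Y' t) + φz t ⬝ᵥ g (Y t, Z t))
      = φy T ⬝ᵥ (y T - Y T) - φy 0 ⬝ᵥ (y 0 - Y 0) :=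
    intervalIntegral.integral_eq_sub_of_hasDeriv_right_of_le hT.le
    (hφyc.continuousOn.dotProduct (hyC.sub hYC)) (fun t ht => (hderiv t ht).hasDerivWithinAt)
    (hint₁.add hint₂)
  rw [intervalIntegral.integral_add hint₁ hint₂, hφT, dotProduct_comm ζy] at hFTC
  linarith

/-- Adjoint error identity (Lemma `adj_error`) for a semi-explicit DAE. -/
theorem index1_terminal_qoi_error_differential_only {n m : ℕ} (T : ℝ) (hT : 0 < T)
    (f : (Fin n → ℝ) × (Fin m → ℝ) → (Fin n → ℝ))
    (g : (Fin n → ℝ) × (Fin m → ℝ) → (Fin m → ℝ))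
    (hf : ContDiff ℝ 1 f) (hg : ContDiff ℝ 1 g)
    (y Y Y' φy : ℝ → Fin n → ℝ) (z Z φz : ℝ → Fin m → ℝ)
    (ζy : Fin n → ℝ)
    (fby : ℝ → Matrix (Fin n) (Fin n) ℝ) (fbz : ℝ → Matrix (Fin n) (Fin m) ℝ)
    (gby : ℝ → Matrix (Fin m) (Fin n) ℝ) (gbz : ℝ → Matrix (Fin m) (Fin m) ℝ)
    -- the averaged Jacobians along the segment between (y,z) and (Y,Z)
    (hfby : ∀ t, fby t = avgJac (fun s y' => f (y', s • z t + (1 - s) • Z t))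
      (fun s => s • y t + (1 - s) • Y t))
    (hfbz : ∀ t, fbz t = avgJac (fun s z' => f (s • y t + (1 - s) • Y t, z'))
      (fun s => s • z t + (1 - s) • Z t))
    (hgby : ∀ t, gby t = avgJac (fun s y' => g (y', s • z t + (1 - s) • Z t))
      (fun s => s • y t + (1 - s) • Y t))
    (hgbz : ∀ t, gbz t = avgJac (fun s z' => g (s • y t + (1 - s) • Y t, z'))
      (fun s => s • z t + (1 - s) • Z t))
    -- the true solution of the DAE
    (hy : ∀ t ∈ Set.Icc (0:ℝ) T, HasDerivAt y (f (y t, z t)) t)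
    (hcon : ∀ t ∈ Set.Icc (0:ℝ) T, g (y t, z t) = 0)
    -- the approximate solution and its derivative
    (hY : ∀ t ∈ Set.Icc (0:ℝ) T, HasDerivAt Y (Y' t) t)
    -- the adjoint DAE
    (hadj1 : ∀ t ∈ Set.Ico (0:ℝ) T,
      HasDerivAt φy (-((fby t)ᵀ *ᵥ φy t + (gby t)ᵀ *ᵥ φz t)) t)
    (hadj2 : ∀ t ∈ Set.Ico (0:ℝ) T,
      (fbz t)ᵀ *ᵥ φy t + (gbz t)ᵀ *ᵥ φz t = 0)
    -- sufficient smoothness for the integrals and integration by parts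
    (hyc : Continuous y) (hYc : Continuous Y) (hY'c : Continuous Y')
    (hzc : Continuous z) (hZc : Continuous Z)
    (hφyc : Continuous φy) (hφzc : Continuous φz)
    -- adjoint terminal condition (ζᶻ = 0)
    (hφT : φy T = ζy) :
    (y T - Y T) ⬝ᵥ ζy
    = φy 0 ⬝ᵥ (y 0 - Y 0)
      + (∫ t in (0:ℝ)..T, φy t ⬝ᵥ (f (Y t, Z t) - Y' t))
      + (∫ t in (0:ℝ)..T, φz t ⬝ᵥ g (Y t, Z t)) :=
  index1_terminal_qoi_error_differential_only_general T hT f g hf hg y Y Y' φy z Z φz ζy fby fbz gby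
    gbz hfby hfbz hgby hgbz hy hcon hY hadj1 hadj2 hY'c hZc hφyc hφzc hφT
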